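/- For 1 ≤ i, j ≤ n there are isomorphisms of R-modules Hom_R(S_i, S_j) ≅ S/(f_1⋯f_j) if i ≥ j, and Hom_R(S_i, S_j) ≅ (f_{i+1}⋯f_j)/(f_1⋯f_j) (the R-submodule of S_j generated by the residue class of f_{i+1}⋯f_j) if i < j. -/
import Mathlib


set_option synthInstance.maxHeartbeats 1000000
set_option maxHeartbeats 1000000

/-- `S = k[[x,y]]`, the formal power series ring in two variables. -/
abbrev PSring (k : Type) [Field k] : Type := MvPowerSeries (Fin 2) k

/-- The maximal ideal `m = (x, y)` of `k[[x,y]]`. -/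
noncomputable abbrev mxy (k : Type) [Field k] : Ideal (PSring k) :=
  Ideal.span {MvPowerSeries.X 0, MvPowerSeries.X 1}

/-- `R = S/(f₁ ⋯ f_n)`. -/
abbrev Rring (k : Type) [Field k] (n : ℕ) (f : ℕ → PSring k) : Type :=
  PSring k ⧸ Ideal.span {∏ j ∈ Finset.range n, f j}

/-- For `a ∈ S`, the `R`-module `R/(ā)`, which is `S/(a)` when `f₁⋯f_n ∈ (a)`. -/
abbrev Qmod (k : Type) [Field k] (n : ℕ) (f : ℕ → PSring k) (a : PSring k) : Type :=
  Rring k n f ⧸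
    Ideal.span {Ideal.Quotient.mk (Ideal.span {∏ j ∈ Finset.range n, f j}) a}

/-- The class of `a ∈ S` in `R/(b̄) = S/(b)`. -/
noncomputable abbrev qcls (k : Type) [Field k] (n : ℕ) (f : ℕ → PSring k)
    (b a : PSring k) : Qmod k n f b :=
  Ideal.Quotient.mk _
    (Ideal.Quotient.mk (Ideal.span {∏ j ∈ Finset.range n, f j}) a)

/-- `Sᵢ = S/(f₁ ⋯ fᵢ)` as an `R`-module (1-based index `i`). -/
abbrev Smod (k : Type) [Field k] (n : ℕ) (f : ℕ → PSring k) (i : ℕ) : Type :=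
  Qmod k n f (∏ j ∈ Finset.range i, f j)

section Aux

variable {R M : Type*} [CommRing R] [AddCommGroup M] [Module R M]

lemma smul_one_quot (r : R) (I : Ideal R) : r • (1 : R ⧸ I) = Ideal.Quotient.mk I r := by
  show Ideal.Quotient.mk I (r * 1) = Ideal.Quotient.mk I r
  rw [mul_one]

/-- `Hom_R(R/(r), M) ≅ M[r]`, the `r`-torsion of `M`. -/
noncomputable def homQuotEquivTorsionBy (r : R) :
    ((R ⧸ Ideal.span {r}) →ₗ[R] M) ≃ₗ[R] Submodule.torsionBy R M r where
  toFun φ := ⟨φ 1, by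
    rw [Submodule.mem_torsionBy_iff]
    calc r • φ 1 = φ (r • 1) := (map_smul φ r 1).symm
    _ = φ (Ideal.Quotient.mk _ r) := by rw [smul_one_quot]
    _ = φ 0 := by
        rw [Ideal.Quotient.eq_zero_iff_mem.mpr (Ideal.mem_span_singleton_self r)]
    _ = 0 := map_zero φ⟩
  map_add' φ ψ := by ext; simp
  map_smul' c φ := by ext; simp
  invFun m := Submodule.liftQ (Ideal.span {r}) (LinearMap.toSpanSingleton R M m)
    (by
      rw [show (Ideal.span {r} : Ideal R) = Submodule.span R {r} from rfl,
        Submodule.span_singleton_le_iff_mem, LinearMap.mem_ker,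
        LinearMap.toSpanSingleton_apply]
      exact m.2)
  left_inv φ := by
    apply LinearMap.ext
    intro x
    obtain ⟨y, rfl⟩ := Ideal.Quotient.mk_surjective x
    rw [show (Ideal.Quotient.mk (Ideal.span {r}) y) = Submodule.Quotient.mk y from rfl,
      Submodule.liftQ_apply, LinearMap.toSpanSingleton_apply]
    calc y • φ 1 = φ (y • 1) := (map_smul φ y 1).symm
    _ = _ := by rw [smul_one_quot]; rfl
  right_inv m := by
    apply Subtype.ext
    show Submodule.liftQ _ _ _ 1 = (m : M)
    rw [show (1 : R ⧸ Ideal.span {r}) = Submodule.Quotient.mk 1 from rfl,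
      Submodule.liftQ_apply, LinearMap.toSpanSingleton_apply, one_smul]

end Aux

section Qcls

variable (k : Type) [Field k] (n : ℕ) (f : ℕ → PSring k) (b : PSring k)

lemma qcls_surjective : Function.Surjective (qcls k n f b) :=
  Function.Surjective.comp Ideal.Quotient.mk_surjective Ideal.Quotient.mk_surjective

lemma smul_qcls (r s : PSring k) :
    (Ideal.Quotient.mk (Ideal.span {∏ j ∈ Finset.range n, f j}) r) • qcls k n f b s =
      qcls k n f b (r * s) := by
  show Ideal.Quotient.mk _ (Ideal.Quotient.mk _ r * Ideal.Quotient.mk _ s) = _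
  rw [← map_mul]

lemma qcls_eq_zero_of_dvd {s : PSring k} (h : b ∣ s) : qcls k n f b s = 0 := by
  obtain ⟨t, rfl⟩ := h
  apply Ideal.Quotient.eq_zero_iff_mem.mpr
  rw [Ideal.mem_span_singleton, map_mul]
  exact Dvd.intro _ rfl

end Qcls

theorem statement2 (k : Type) [Field k] [Infinite k]
    (n : ℕ) (hn : 1 ≤ n) (f : ℕ → PSring k)
    (hmem : ∀ i < n, f i ∈ mxy k)
    (hirr : ∀ i < n, Irreducible (f i))
    (hdist : ∀ i < n, ∀ j < n, i ≠ j →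
      (Ideal.span {f i} : Ideal (PSring k)) ≠ Ideal.span {f j}) :
    ∀ i j : ℕ, 1 ≤ i → i ≤ n → 1 ≤ j → j ≤ n →
      (j ≤ i →
        Nonempty ((Smod k n f i →ₗ[Rring k n f] Smod k n f j) ≃ₗ[Rring k n f]
          Smod k n f j)) ∧
      (i < j →
        Nonempty ((Smod k n f i →ₗ[Rring k n f] Smod k n f j) ≃ₗ[Rring k n f]
          (Submodule.span (Rring k n f)
            {qcls k n f (∏ t ∈ Finset.range j, f t) (∏ t ∈ Finset.Ico i j, f t)}))) := by
  intro i j hi1 hin hj1 hjn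
  constructor
  · -- case j ≤ i : Hom ≅ S_j
    intro hji
    have htop : Submodule.torsionBy (Rring k n f) (Smod k n f j)
        (Ideal.Quotient.mk (Ideal.span {∏ t ∈ Finset.range n, f t})
          (∏ t ∈ Finset.range i, f t)) = ⊤ := by
      rw [eq_top_iff]
      intro m _
      obtain ⟨s, rfl⟩ := qcls_surjective k n f (∏ t ∈ Finset.range j, f t) m
      rw [Submodule.mem_torsionBy_iff, smul_qcls]
      apply qcls_eq_zero_of_dvd
      exact Dvd.dvd.mul_right
        ⟨∏ t ∈ Finset.Ico j i, f t, (Finset.prod_range_mul_prod_Ico f hji).symm⟩ s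
    exact ⟨(homQuotEquivTorsionBy _).trans
      ((LinearEquiv.ofEq _ _ htop).trans Submodule.topEquiv)⟩
  · -- case i < j : Hom ≅ (f_{i+1}⋯f_j)/(f_1⋯f_j)
    intro hij
    have hbeq : (∏ t ∈ Finset.range i, f t) * (∏ t ∈ Finset.Ico i j, f t) =
        ∏ t ∈ Finset.range j, f t := Finset.prod_range_mul_prod_Ico f hij.le
    have hFeq : (∏ t ∈ Finset.range j, f t) * (∏ t ∈ Finset.Ico j n, f t) =
        ∏ t ∈ Finset.range n, f t := Finset.prod_range_mul_prod_Ico f hjn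
    have ha0 : (∏ t ∈ Finset.range i, f t) ≠ 0 :=
      Finset.prod_ne_zero_iff.mpr fun t ht =>
        (hirr t (lt_of_lt_of_le (Finset.mem_range.mp ht) (hij.le.trans hjn))).ne_zero
    have heq : Submodule.torsionBy (Rring k n f) (Smod k n f j)
        (Ideal.Quotient.mk (Ideal.span {∏ t ∈ Finset.range n, f t})
          (∏ t ∈ Finset.range i, f t)) =
        Submodule.span (Rring k n f)
          {qcls k n f (∏ t ∈ Finset.range j, f t) (∏ t ∈ Finset.Ico i j, f t)} := by
      apply le_antisymm
      · intro m hm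
        obtain ⟨s, rfl⟩ := qcls_surjective k n f (∏ t ∈ Finset.range j, f t) m
        rw [Submodule.mem_torsionBy_iff, smul_qcls] at hm
        rw [Ideal.Quotient.eq_zero_iff_mem, Ideal.mem_span_singleton] at hm
        obtain ⟨r, hr⟩ := hm
        obtain ⟨u, rfl⟩ := Ideal.Quotient.mk_surjective r
        rw [← map_mul, Ideal.Quotient.mk_eq_mk_iff_sub_mem,
          Ideal.mem_span_singleton] at hr
        obtain ⟨v, hv⟩ := hr
        have hs : s = (∏ t ∈ Finset.Ico i j, f t) *
            (u + (∏ t ∈ Finset.Ico j n, f t) * v) := by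
          apply mul_left_cancel₀ ha0
          rw [sub_eq_iff_eq_add] at hv
          rw [hv, ← hFeq, ← hbeq]
          ring
        rw [hs]
        rw [Submodule.mem_span_singleton]
        refine ⟨Ideal.Quotient.mk _ (u + (∏ t ∈ Finset.Ico j n, f t) * v), ?_⟩
        rw [smul_qcls, mul_comm]
      · rw [Submodule.span_le, Set.singleton_subset_iff, SetLike.mem_coe,
          Submodule.mem_torsionBy_iff, smul_qcls]
        exact qcls_eq_zero_of_dvd k n f _ ⟨1, by rw [mul_one, hbeq]⟩
    exact ⟨(homQuotEquivTorsionBy _).trans (LinearEquiv.ofEq _ _ heq)⟩
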